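/- arXiv:2008.01799 — 5 statements merged into one kernel-verified Lean document; each statement's English description precedes it below -/
import Mathlib

section
/- Let K_1, K_2, H_1, H_2 be complex Hilbert spaces, A : K_1 → H_1, B : K_2 → H_2 and X : K_2 → H_1 bounded operators, and let T : K_1 ⊕ K_2 → H_1 ⊕ H_2 be the block operator T(k_1, k_2) = (A k_1 + X k_2, B k_2), i.e. T = [[A, X], [0, B]]. Then ‖T‖ ≤ 1 if and only if ‖A‖ ≤ 1, ‖B‖ ≤ 1, and there exists a bounded operator L : K_2 → H_1 with ‖L‖ ≤ 1 such that X = D_{A*} ∘ L ∘ D_B. (Applied with K_i = H_i^n, this characterizes when an upper-triangular 2×2 block of row operators is a row contraction.) -/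
open scoped InnerProductSpace

set_option maxHeartbeats 1000000
set_option synthInstance.maxHeartbeats 400000

noncomputable section

namespace RowContr

instance {n : ℕ} {H : Type*} [NormedAddCommGroup H] [CompleteSpace H] :
    CompleteSpace (PiLp 2 fun _ : Fin n => H) :=
  inferInstance

/-- Ordered product `T^α = T 0 ^ α 0 ⬝ ⋯ ⬝ T (n-1) ^ α (n-1)`
(for commuting tuples the order is immaterial). -/
def mpow {n : ℕ} {H : Type*} [NormedAddCommGroup H] [InnerProductSpace ℂ H]
    (T : Fin n → H →L[ℂ] H) (α : Fin n → ℕ) : H →L[ℂ] H :=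
  (List.ofFn fun i => (T i) ^ (α i)).prod

/-- The finset of all multi-indices `α : Fin n → ℕ` with `|α| = k`. -/
def multiIdx (n k : ℕ) : Finset (Fin n → ℕ) :=
  (Fintype.piFinset fun _ : Fin n => Finset.range (k + 1)).filter fun α => ∑ i, α i = k

/-- The row operator `E^n → F` associated with a tuple of operators, acting on the
Hilbert direct sum `PiLp 2`. -/
def rowOp {n : ℕ} {E F : Type*} [NormedAddCommGroup E] [InnerProductSpace ℂ E]
    [NormedAddCommGroup F] [InnerProductSpace ℂ F]
    (T : Fin n → E →L[ℂ] F) : PiLp 2 (fun _ : Fin n => E) →L[ℂ] F :=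
  ∑ i, (T i).comp (PiLp.proj 2 (fun _ : Fin n => E) i)

/-- The `α`-th Taylor coefficient of the characteristic function of `T`, where `Dstar`
plays the role of the defect operator `D_{T*}` and `D` the role of `D_T`:
`θ_{T,α} = ∑_{j : α_j ≥ 1} γ_{α-e_j} • D_{T*} T^{*(α-e_j)} P_j D_T`. -/
def charCoeff {n : ℕ} {H : Type*} [NormedAddCommGroup H] [InnerProductSpace ℂ H]
    [CompleteSpace H] (T : Fin n → H →L[ℂ] H) (Dstar : H →L[ℂ] H)
    (D : PiLp 2 (fun _ : Fin n => H) →L[ℂ] PiLp 2 (fun _ : Fin n => H))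
    (α : Fin n → ℕ) : PiLp 2 (fun _ : Fin n => H) →L[ℂ] H :=
  ∑ j ∈ Finset.univ.filter (fun j => 0 < α j),
    (Nat.multinomial Finset.univ (α - Pi.single j 1) : ℂ) •
      (Dstar ∘L (star (mpow T (α - Pi.single j 1))) ∘L (PiLp.proj 2 (fun _ : Fin n => H) j) ∘L D)

/-- The closure of the span of `{T^α D_{T*} h : h ∈ H, |α| ≥ m}`. -/
def rangeSpanGE {n : ℕ} {H : Type*} [NormedAddCommGroup H] [InnerProductSpace ℂ H]
    (T : Fin n → H →L[ℂ] H) (Dstar : H →L[ℂ] H) (m : ℕ) : Submodule ℂ H :=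
  (Submodule.span ℂ
    {x : H | ∃ (α : Fin n → ℕ) (h : H), m ≤ ∑ i, α i ∧ x = mpow T α (Dstar h)}).topologicalClosure

/-- The closure of the span of `{T^α D_{T*} h : h ∈ H, |α| = m}`. -/
def rangeSpanEQ {n : ℕ} {H : Type*} [NormedAddCommGroup H] [InnerProductSpace ℂ H]
    (T : Fin n → H →L[ℂ] H) (Dstar : H →L[ℂ] H) (m : ℕ) : Submodule ℂ H :=
  (Submodule.span ℂ
    {x : H | ∃ (α : Fin n → ℕ) (h : H), ∑ i, α i = m ∧ x = mpow T α (Dstar h)}).topologicalClosure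

/-- The closure of the span of `{T^α D_{T*} h : h ∈ H, α ∈ ℕ^n}`. -/
def rangeSpanAll {n : ℕ} {H : Type*} [NormedAddCommGroup H] [InnerProductSpace ℂ H]
    (T : Fin n → H →L[ℂ] H) (Dstar : H →L[ℂ] H) : Submodule ℂ H :=
  (Submodule.span ℂ
    {x : H | ∃ (α : Fin n → ℕ) (h : H), x = mpow T α (Dstar h)}).topologicalClosure

/-- The set `H_c = {h ∈ H : ∑_{|α| = k} γ_α ‖T^{*α} h‖² = ‖h‖² for all k ∈ ℕ}`. -/
def Hc {n : ℕ} {H : Type*} [NormedAddCommGroup H] [InnerProductSpace ℂ H] [CompleteSpace H]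
    (T : Fin n → H →L[ℂ] H) : Set H :=
  {h : H | ∀ k : ℕ, ∑ α ∈ multiIdx n k,
    (Nat.multinomial Finset.univ α : ℝ) * ‖star (mpow T α) h‖ ^ 2 = ‖h‖ ^ 2}

end RowContr

/-!
Through the Pythagorean identity `‖B k‖² + ‖D_B k‖² = ‖k‖²`, `‖T‖ ≤ 1` says
`‖A k₁ + X k₂‖² ≤ ‖k₁‖² + ‖D_B k₂‖²`. Putting `k₁ = 0`, `X` is dominated by `D_B`, so
(Douglas) `X = C D_B` with `C` zero on `(ran D_B)ᗮ`, and then the row `[A C]` is a contraction.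
Passing to the adjoint column, this means `‖A* z‖² + ‖C* z‖² ≤ ‖z‖²`, i.e. `C*` is dominated
by `D_{A*}`, and a second Douglas factorisation gives `C = D_{A*} L`. Conversely `[A D_{A*}]`
is a coisometry, so `[A D_{A*} L]` is a contraction whenever `L` is.
-/

open ContinuousLinearMap
open scoped InnerProduct

section

variable {𝕜 E F G K : Type*} [RCLike 𝕜]
  [NormedAddCommGroup E] [InnerProductSpace 𝕜 E]
  [NormedAddCommGroup F] [InnerProductSpace 𝕜 F]
  [NormedAddCommGroup G] [InnerProductSpace 𝕜 G]
  [NormedAddCommGroup K] [InnerProductSpace 𝕜 K]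

theorem Submodule.exists_extension_opNorm_le [CompleteSpace F] [CompleteSpace G]
    (S : Submodule 𝕜 F) (f : S →L[𝕜] G) :
    ∃ g : F →L[𝕜] G, ‖g‖ ≤ ‖f‖ ∧ (∀ x : S, g x = f x) ∧
      ∀ x, g (S.topologicalClosure.starProjection x) = g x := by
  set S' := S.topologicalClosure
  let e : S →L[𝕜] S' :=
    (Submodule.inclusion S.le_topologicalClosure).mkContinuous 1 fun x => by simp
  have he_norm (x : S) : ‖e x‖ = ‖x‖ := rfl
  have he_dense : DenseRange e := by
    change DenseRange (Set.inclusion S.le_topologicalClosure)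
    exact (denseRange_inclusion_iff _).mpr (Submodule.topologicalClosure_coe S).le
  have he_ind : IsUniformInducing e :=
    (AddMonoidHomClass.isometry_of_norm e he_norm).isUniformInducing
  refine ⟨f.extend e ∘L S'.orthogonalProjectionOnto, ?_, fun x => ?_, fun x => ?_⟩
  · calc ‖f.extend e ∘L S'.orthogonalProjectionOnto‖
        ≤ ‖f.extend e‖ * ‖S'.orthogonalProjectionOnto‖ := opNorm_comp_le _ _
      _ ≤ (1 * ‖f‖) * 1 := by
          gcongr
          · exact opNorm_extend_le (N := 1) f he_dense fun x => by simp [he_norm]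
          · exact Submodule.orthogonalProjectionOnto_norm_le _
      _ = ‖f‖ := by ring
  · have : S'.orthogonalProjectionOnto (x : F) = e x :=
      Submodule.orthogonalProjectionOnto_mem_subspace_eq_self
        (⟨x, S.le_topologicalClosure x.2⟩ : S')
    rw [comp_apply, this, extend_eq f he_dense he_ind]
  · rw [comp_apply, comp_apply, Submodule.starProjection_apply,
      Submodule.orthogonalProjectionOnto_mem_subspace_eq_self]

namespace ContinuousLinearMap

/-- Douglas' factorisation lemma. -/
theorem exists_opNorm_le_one_comp_eq [CompleteSpace F] [CompleteSpace G]
    (Q : E →L[𝕜] F) (V : E →L[𝕜] G) (hV : ∀ e, ‖V e‖ ≤ ‖Q e‖) :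
    ∃ L : F →L[𝕜] G, ‖L‖ ≤ 1 ∧ L ∘L Q = V ∧
      ∀ x, L ((LinearMap.range (Q : E →ₗ[𝕜] F)).topologicalClosure.starProjection x) = L x := by
  have hker : LinearMap.ker (Q : E →ₗ[𝕜] F) ≤ LinearMap.ker (V : E →ₗ[𝕜] G) := fun e he => by
    simp only [LinearMap.mem_ker, ContinuousLinearMap.coe_coe] at he ⊢
    simpa [he] using hV e
  let f₀ : LinearMap.range (Q : E →ₗ[𝕜] F) →ₗ[𝕜] G :=
    (LinearMap.ker (Q : E →ₗ[𝕜] F)).liftQ V hker ∘ₗ (Q : E →ₗ[𝕜] F).quotKerEquivRange.symm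
  have hf₀ (e : E) : f₀ ⟨Q e, ⟨e, rfl⟩⟩ = V e := by
    have := LinearMap.quotKerEquivRange_symm_apply_image (Q : E →ₗ[𝕜] F) e ⟨e, rfl⟩
    simp only [ContinuousLinearMap.coe_coe] at this
    simp only [f₀, LinearMap.coe_comp, Function.comp_apply, LinearEquiv.coe_coe, this,
      Submodule.mkQ_apply, Submodule.liftQ_apply, ContinuousLinearMap.coe_coe]
  have hbound (y : LinearMap.range (Q : E →ₗ[𝕜] F)) : ‖f₀ y‖ ≤ 1 * ‖y‖ := by
    obtain ⟨_, e, rfl⟩ := y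
    change ‖f₀ ⟨Q e, ⟨e, rfl⟩⟩‖ ≤ 1 * ‖Q e‖
    rw [one_mul, hf₀]
    exact hV e
  obtain ⟨L, hL, hLf, hLproj⟩ :=
    (LinearMap.range (Q : E →ₗ[𝕜] F)).exists_extension_opNorm_le (f₀.mkContinuous 1 hbound)
  refine ⟨L, hL.trans (LinearMap.mkContinuous_norm_le _ zero_le_one _), ?_, hLproj⟩
  ext e
  exact (hLf ⟨Q e, ⟨e, rfl⟩⟩).trans (hf₀ e)

theorem norm_sq_add_norm_sq_eq_of_comp_self_eq [CompleteSpace E] [CompleteSpace F]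
    {B : E →L[𝕜] F} {D : E →L[𝕜] E} (hD : IsSelfAdjoint D) (hD2 : D ∘L D = 1 - B† ∘L B)
    (x : E) : ‖D x‖ ^ 2 + ‖B x‖ ^ 2 = ‖x‖ ^ 2 := by
  rw [apply_norm_sq_eq_inner_adjoint_left D, apply_norm_sq_eq_inner_adjoint_left B,
    hD.adjoint_eq, hD2, ← inner_self_eq_norm_sq (𝕜 := 𝕜)]
  simp [inner_sub_left]

theorem opNorm_le_one_iff_norm_sq_le (S : E →L[𝕜] F) :
    ‖S‖ ≤ 1 ↔ ∀ x, ‖S x‖ ^ 2 ≤ ‖x‖ ^ 2 := by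
  simp only [opNorm_le_iff zero_le_one, one_mul, sq_le_sq₀ (norm_nonneg _) (norm_nonneg _)]

theorem row_contraction_iff_adjoint [CompleteSpace E] [CompleteSpace F] [CompleteSpace G]
    (A : E →L[𝕜] G) (C : F →L[𝕜] G) :
    (∀ x y, ‖A x + C y‖ ^ 2 ≤ ‖x‖ ^ 2 + ‖y‖ ^ 2) ↔
      ∀ z, ‖(A†) z‖ ^ 2 + ‖(C†) z‖ ^ 2 ≤ ‖z‖ ^ 2 := by
  let e := WithLp.prodContinuousLinearEquiv 2 𝕜 E F
  let R : WithLp 2 (E × F) →L[𝕜] G := A.coprod C ∘L (e : WithLp 2 (E × F) →L[𝕜] E × F)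
  have hR : R† = (e.symm : E × F →L[𝕜] WithLp 2 (E × F)) ∘L (A†).prod (C†) := by
    symm
    rw [eq_adjoint_iff]
    intro z x
    simp [R, e, WithLp.prod_inner_apply, adjoint_inner_left, inner_add_right]
  calc (∀ x y, ‖A x + C y‖ ^ 2 ≤ ‖x‖ ^ 2 + ‖y‖ ^ 2) ↔ ‖R‖ ≤ 1 := by
        rw [opNorm_le_one_iff_norm_sq_le]
        simp only [R, e, WithLp.prod_norm_sq_eq_of_L2]
        exact ⟨fun h x => h _ _, fun h x y => h (WithLp.toLp 2 (x, y))⟩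
    _ ↔ ‖R†‖ ≤ 1 := by rw [LinearIsometryEquiv.norm_map]
    _ ↔ _ := by
        rw [hR, opNorm_le_one_iff_norm_sq_le]
        simp [e, WithLp.prod_norm_sq_eq_of_L2]

theorem exists_comp_eq_and_row_contraction [CompleteSpace F] [CompleteSpace G]
    (A : K →L[𝕜] G) (X : E →L[𝕜] G) (Q : E →L[𝕜] F)
    (h : ∀ k e, ‖A k + X e‖ ^ 2 ≤ ‖k‖ ^ 2 + ‖Q e‖ ^ 2) :
    ∃ C : F →L[𝕜] G, C ∘L Q = X ∧ ∀ k y, ‖A k + C y‖ ^ 2 ≤ ‖k‖ ^ 2 + ‖y‖ ^ 2 := by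
  have hX (e : E) : ‖X e‖ ≤ ‖Q e‖ := by
    simpa [sq_le_sq₀ (norm_nonneg _) (norm_nonneg _)] using h 0 e
  obtain ⟨C, -, hCQ, hCproj⟩ := exists_opNorm_le_one_comp_eq Q X hX
  refine ⟨C, hCQ, fun k y => ?_⟩
  set S := (LinearMap.range (Q : E →ₗ[𝕜] F)).topologicalClosure
  have hS : ∀ y ∈ S, ‖A k + C y‖ ^ 2 ≤ ‖k‖ ^ 2 + ‖y‖ ^ 2 := by
    intro y hy
    have hcl : IsClosed {y | ‖A k + C y‖ ^ 2 ≤ ‖k‖ ^ 2 + ‖y‖ ^ 2} :=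
      isClosed_le (by fun_prop) (by fun_prop)
    refine closure_minimal ?_ hcl
      (by rwa [← SetLike.mem_coe, Submodule.topologicalClosure_coe] at hy)
    rintro _ ⟨e, rfl⟩
    simpa [← hCQ] using h k e
  calc ‖A k + C y‖ ^ 2 = ‖A k + C (S.starProjection y)‖ ^ 2 := by rw [hCproj]
    _ ≤ ‖k‖ ^ 2 + ‖S.starProjection y‖ ^ 2 := hS _ (S.starProjection_apply_mem y)
    _ ≤ ‖k‖ ^ 2 + ‖y‖ ^ 2 := by gcongr; exact Submodule.norm_starProjection_apply_le S y

theorem exists_defect_factorization_iff [CompleteSpace K] [CompleteSpace F] [CompleteSpace G]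
    (A : K →L[𝕜] G) (X : E →L[𝕜] G) (Q : E →L[𝕜] F) {D : G →L[𝕜] G}
    (hD : IsSelfAdjoint D) (hD2 : D ∘L D = 1 - A ∘L A†) :
    (∀ k e, ‖A k + X e‖ ^ 2 ≤ ‖k‖ ^ 2 + ‖Q e‖ ^ 2) ↔
      ∃ L : F →L[𝕜] G, ‖L‖ ≤ 1 ∧ X = D ∘L L ∘L Q := by
  have hdefect (z : G) : ‖D z‖ ^ 2 + ‖(A†) z‖ ^ 2 = ‖z‖ ^ 2 :=
    norm_sq_add_norm_sq_eq_of_comp_self_eq hD (by rwa [adjoint_adjoint]) z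
  constructor
  · intro h
    obtain ⟨C, rfl, hC⟩ := exists_comp_eq_and_row_contraction A X Q h
    have hCD (z : G) : ‖(C†) z‖ ≤ ‖D z‖ := by
      rw [← sq_le_sq₀ (norm_nonneg _) (norm_nonneg _)]
      linarith [(row_contraction_iff_adjoint A C).mp hC z, hdefect z]
    obtain ⟨M, hM, hMD, -⟩ := exists_opNorm_le_one_comp_eq D (C†) hCD
    refine ⟨M†, by rwa [LinearIsometryEquiv.norm_map], ?_⟩
    rw [← adjoint_adjoint C, ← hMD, adjoint_comp, hD.adjoint_eq, comp_assoc]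
  · rintro ⟨L, hL, rfl⟩ k e
    have hrow : ∀ h, ‖A k + D h‖ ^ 2 ≤ ‖k‖ ^ 2 + ‖h‖ ^ 2 :=
      (row_contraction_iff_adjoint A D).mpr (fun z => by rw [hD.adjoint_eq]; linarith [hdefect z]) k
    calc ‖A k + (D ∘L L ∘L Q) e‖ ^ 2 ≤ ‖k‖ ^ 2 + ‖L (Q e)‖ ^ 2 := hrow _
      _ ≤ ‖k‖ ^ 2 + ‖Q e‖ ^ 2 := by
        gcongr
        simpa using le_of_opNorm_le L hL (Q e)

theorem opNorm_le_one_iff_of_upperTriangular {K₁ K₂ H₁ H₂ : Type*}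
    [NormedAddCommGroup K₁] [InnerProductSpace 𝕜 K₁]
    [NormedAddCommGroup K₂] [InnerProductSpace 𝕜 K₂]
    [NormedAddCommGroup H₁] [InnerProductSpace 𝕜 H₁]
    [NormedAddCommGroup H₂] [InnerProductSpace 𝕜 H₂]
    {A : K₁ →L[𝕜] H₁} {B : K₂ →L[𝕜] H₂} {X : K₂ →L[𝕜] H₁}
    {T : WithLp 2 (K₁ × K₂) →L[𝕜] WithLp 2 (H₁ × H₂)}
    (hT : ∀ k, WithLp.prodContinuousLinearEquiv 2 𝕜 H₁ H₂ (T k)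
        = (A (WithLp.prodContinuousLinearEquiv 2 𝕜 K₁ K₂ k).1
            + X (WithLp.prodContinuousLinearEquiv 2 𝕜 K₁ K₂ k).2,
           B (WithLp.prodContinuousLinearEquiv 2 𝕜 K₁ K₂ k).2)) :
    ‖T‖ ≤ 1 ↔ ∀ k₁ k₂, ‖A k₁ + X k₂‖ ^ 2 + ‖B k₂‖ ^ 2 ≤ ‖k₁‖ ^ 2 + ‖k₂‖ ^ 2 := by
  have hTk (k) : ‖T k‖ ^ 2 = ‖A k.fst + X k.snd‖ ^ 2 + ‖B k.snd‖ ^ 2 := by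
    obtain ⟨h₁, h₂⟩ := Prod.ext_iff.mp (hT k)
    rw [WithLp.prod_norm_sq_eq_of_L2]
    exact congrArg₂ (‖·‖ ^ 2 + ‖·‖ ^ 2) h₁ h₂
  rw [opNorm_le_one_iff_norm_sq_le]
  simp only [hTk, WithLp.prod_norm_sq_eq_of_L2]
  exact ⟨fun h k₁ k₂ => h (WithLp.toLp 2 (k₁, k₂)), fun h k => h _ _⟩

end ContinuousLinearMap

end

namespace ContinuousLinearMap

variable {E F : Type*} [NormedAddCommGroup E] [InnerProductSpace ℂ E] [CompleteSpace E]
  [NormedAddCommGroup F] [InnerProductSpace ℂ F] [CompleteSpace F]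

theorem comp_adjoint_le_one {A : E →L[ℂ] F} (hA : ‖A‖ ≤ 1) : A ∘L A† ≤ 1 := by
  have h0 : 0 ≤ A ∘L A† := (nonneg_iff_isPositive _).mpr (isPositive_self_comp_adjoint A)
  rw [← CStarAlgebra.norm_le_one_iff_of_nonneg _ h0]
  calc ‖A ∘L A†‖ = ‖A‖ * ‖A‖ := by
        simpa [LinearIsometryEquiv.norm_map] using norm_adjoint_comp_self (A†)
    _ ≤ 1 := mul_le_one₀ hA (norm_nonneg _) hA

theorem adjoint_comp_le_one {A : E →L[ℂ] F} (hA : ‖A‖ ≤ 1) : A† ∘L A ≤ 1 := by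
  simpa using comp_adjoint_le_one (A := A†) (by rwa [LinearIsometryEquiv.norm_map])

theorem exists_isPositive_comp_self_eq {T : E →L[ℂ] E} (hT : 0 ≤ T) :
    ∃ D : E →L[ℂ] E, D.IsPositive ∧ D ∘L D = T :=
  ⟨CFC.sqrt T, (nonneg_iff_isPositive _).mp (CFC.sqrt_nonneg T), CFC.sqrt_mul_sqrt_self T hT⟩

end ContinuousLinearMap

namespace RowContr

theorem statement_0 {K₁ K₂ H₁ H₂ : Type*}
    [NormedAddCommGroup K₁] [InnerProductSpace ℂ K₁] [CompleteSpace K₁]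
    [NormedAddCommGroup K₂] [InnerProductSpace ℂ K₂] [CompleteSpace K₂]
    [NormedAddCommGroup H₁] [InnerProductSpace ℂ H₁] [CompleteSpace H₁]
    [NormedAddCommGroup H₂] [InnerProductSpace ℂ H₂] [CompleteSpace H₂]
    (A : K₁ →L[ℂ] H₁) (B : K₂ →L[ℂ] H₂) (X : K₂ →L[ℂ] H₁)
    (T : WithLp 2 (K₁ × K₂) →L[ℂ] WithLp 2 (H₁ × H₂))
    (hT : ∀ k : WithLp 2 (K₁ × K₂),
      WithLp.prodContinuousLinearEquiv 2 ℂ H₁ H₂ (T k)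
        = (A (WithLp.prodContinuousLinearEquiv 2 ℂ K₁ K₂ k).1
            + X (WithLp.prodContinuousLinearEquiv 2 ℂ K₁ K₂ k).2,
           B (WithLp.prodContinuousLinearEquiv 2 ℂ K₁ K₂ k).2)) :
    ‖T‖ ≤ 1 ↔
      ‖A‖ ≤ 1 ∧ ‖B‖ ≤ 1 ∧
        ∃ (DAstar : H₁ →L[ℂ] H₁) (DB : K₂ →L[ℂ] K₂) (L : K₂ →L[ℂ] H₁),
          DAstar.IsPositive ∧
          DAstar ∘L DAstar = 1 - A ∘L ContinuousLinearMap.adjoint A ∧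
          DB.IsPositive ∧
          DB ∘L DB = 1 - ContinuousLinearMap.adjoint B ∘L B ∧
          ‖L‖ ≤ 1 ∧ X = DAstar ∘L L ∘L DB := by
  rw [opNorm_le_one_iff_of_upperTriangular hT]
  constructor
  · intro h
    have hA : ‖A‖ ≤ 1 :=
      (opNorm_le_one_iff_norm_sq_le A).mpr fun k => by simpa using h k 0
    have hB : ‖B‖ ≤ 1 :=
      (opNorm_le_one_iff_norm_sq_le B).mpr fun k => by
        have := h 0 k
        simp only [map_zero, zero_add, norm_zero, ne_eq, OfNat.ofNat_ne_zero,
          not_false_eq_true, zero_pow] at this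
        linarith [sq_nonneg ‖X k‖]
    obtain ⟨DA, hDA, hDA2⟩ :=
      exists_isPositive_comp_self_eq (sub_nonneg.mpr (comp_adjoint_le_one hA))
    obtain ⟨DB, hDB, hDB2⟩ :=
      exists_isPositive_comp_self_eq (sub_nonneg.mpr (adjoint_comp_le_one hB))
    obtain ⟨L, hL, hX⟩ := (exists_defect_factorization_iff A X DB hDA.isSelfAdjoint hDA2).mp
      fun k₁ k₂ => by
        linarith [h k₁ k₂, norm_sq_add_norm_sq_eq_of_comp_self_eq hDB.isSelfAdjoint hDB2 k₂]
    exact ⟨hA, hB, DA, DB, L, hDA, hDA2, hDB, hDB2, hL, hX⟩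
  · rintro ⟨-, -, DA, DB, L, hDA, hDA2, hDB, hDB2, hL, hX⟩ k₁ k₂
    linarith [(exists_defect_factorization_iff A X DB hDA.isSelfAdjoint hDA2).mpr ⟨L, hL, hX⟩ k₁ k₂,
      norm_sq_add_norm_sq_eq_of_comp_self_eq hDB.isSelfAdjoint hDB2 k₂]

end RowContr
end
end

section
/- Let T be a commuting row contraction on H whose characteristic function is a polynomial of degree at most m. Then for every α ∈ ℕ^n with |α| ≥ m + 1 and every i ∈ {1, …, n}: |α| · T_i* T^α D_{T*} = α_i · T^{α − e_i} D_{T*} (in particular, T_i* T^α D_{T*} = 0 when α_i = 0). -/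
/-!
Evaluating `θ_{T,α} = 0` (for `|α| > m`) at `D_T (e_i ⊗ h)` and using `D_T² = I - T̂* T̂` gives
`[α_i > 0] γ_{α-e_i} D_{T*} T^{*(α-e_i)} = ∑_{j : α_j > 0} γ_{α-e_j} D_{T*} T^{*(α-e_j)} T_j* T_i`.
After taking adjoints, commutativity gives `T_j T^{α-e_j} = T^α`, and the Pascal rule
`∑_j γ_{α-e_j} = γ_α` turns the right side into `γ_α T_i* T^α D_{T*}`. The identity
`|α| γ_{α-e_i} = α_i γ_α` then yields the claim after cancelling `γ_α`.
-/

open scoped InnerProductSpace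

set_option maxHeartbeats 1000000
set_option synthInstance.maxHeartbeats 400000

noncomputable section

namespace RowContr

section Multinomial

open scoped Nat

variable {ι : Type*} [DecidableEq ι]

theorem sub_single_add_single {f : ι → ℕ} {j : ι} (hj : 0 < f j) :
    f - Pi.single j 1 + Pi.single j 1 = f := by
  funext k
  by_cases hk : k = j
  · subst hk
    simp only [Pi.add_apply, Pi.sub_apply, Pi.single_eq_same]
    omega
  · simp [Pi.single_eq_of_ne hk]

theorem sum_mul_multinomial_sub_single {s : Finset ι} {f : ι → ℕ} {j : ι} (hjs : j ∈ s)
    (hj : 0 < f j) :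
    (∑ i ∈ s, f i) * Nat.multinomial s (f - Pi.single j 1) = f j * Nat.multinomial s f := by
  set g := f - Pi.single j 1
  have hgf : g + Pi.single j 1 = f := sub_single_add_single hj
  have hsum : ∑ i ∈ s, f i = ∑ i ∈ s, g i + 1 := by
    simp only [← hgf, Pi.add_apply, Finset.sum_add_distrib, Finset.sum_pi_single', if_pos hjs]
  have hprod : ∏ i ∈ s, (f i)! = f j * ∏ i ∈ s, (g i)! := by
    have hoff : ∀ i ∈ s.erase j, g i = f i := fun i hi ↦ by
      simp [g, Pi.single_eq_of_ne (Finset.ne_of_mem_erase hi)]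
    rw [← Finset.mul_prod_erase s _ hjs, ← Finset.mul_prod_erase s _ hjs,
      Finset.prod_congr rfl fun i hi ↦ congrArg Nat.factorial (hoff i hi), ← mul_assoc,
      show g j = f j - 1 by simp [g], Nat.mul_factorial_pred hj.ne']
  refine Nat.eq_of_mul_eq_mul_left (n := ∏ i ∈ s, (g i)!)
    (Finset.prod_pos fun i _ ↦ (g i).factorial_pos) ?_
  calc (∏ i ∈ s, (g i)!) * ((∑ i ∈ s, f i) * Nat.multinomial s g)
      = (∑ i ∈ s, g i + 1) * ((∏ i ∈ s, (g i)!) * Nat.multinomial s g) := by rw [hsum]; ring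
    _ = (∑ i ∈ s, f i)! := by rw [Nat.multinomial_spec, hsum, Nat.factorial_succ]
    _ = (∏ i ∈ s, (g i)!) * (f j * Nat.multinomial s f) := by
      rw [← Nat.multinomial_spec, hprod]; ring

theorem multinomial_eq_sum_multinomial_sub_single {s : Finset ι} {f : ι → ℕ}
    (hf : 0 < ∑ i ∈ s, f i) :
    Nat.multinomial s f = ∑ j ∈ s.filter (0 < f ·), Nat.multinomial s (f - Pi.single j 1) := by
  refine Nat.eq_of_mul_eq_mul_left hf ?_
  rw [Finset.mul_sum, Finset.sum_congr rfl fun j hj ↦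
    sum_mul_multinomial_sub_single (Finset.mem_filter.mp hj).1 (Finset.mem_filter.mp hj).2,
    ← Finset.sum_mul, Finset.sum_filter_of_ne fun _ _ h ↦ Nat.pos_of_ne_zero h]

end Multinomial

section Mpow

variable {H : Type*} [NormedAddCommGroup H] [InnerProductSpace ℂ H]

theorem mpow_eq_pow_mul_mpow_succ {n : ℕ} (T : Fin (n + 1) → H →L[ℂ] H) (α : Fin (n + 1) → ℕ) :
    mpow T α = T 0 ^ α 0 * mpow (fun k ↦ T k.succ) (fun k ↦ α k.succ) := by
  simp [mpow, List.ofFn_succ]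

theorem mpow_add_single {n : ℕ} {T : Fin n → H →L[ℂ] H} (hcomm : ∀ i j, Commute (T i) (T j))
    (α : Fin n → ℕ) (i : Fin n) : mpow T (α + Pi.single i 1) = T i * mpow T α := by
  induction n with
  | zero => exact i.elim0
  | succ n ih =>
    rw [mpow_eq_pow_mul_mpow_succ, mpow_eq_pow_mul_mpow_succ]
    cases i using Fin.cases with
    | zero =>
      have htail :
          (fun k : Fin n ↦ (α + Pi.single 0 1 : Fin (n + 1) → ℕ) k.succ) = fun k ↦ α k.succ := by
        funext k; simp
      rw [htail, Pi.add_apply, Pi.single_eq_same, pow_succ', mul_assoc]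
    | succ i =>
      have htail : (fun k : Fin n ↦ (α + Pi.single i.succ 1 : Fin (n + 1) → ℕ) k.succ)
          = (fun k ↦ α k.succ) + Pi.single i 1 := by
        funext k; simp [Pi.single_apply]
      rw [htail, ih (fun _ _ ↦ hcomm _ _), Pi.add_apply,
        Pi.single_eq_of_ne (Fin.succ_ne_zero i).symm, add_zero, ← mul_assoc, ← mul_assoc,
        ((hcomm i.succ 0).pow_right _).eq]

theorem mpow_eq_mul_mpow_sub_single {n : ℕ} {T : Fin n → H →L[ℂ] H}
    (hcomm : ∀ i j, Commute (T i) (T j)) {α : Fin n → ℕ} {i : Fin n} (hi : 0 < α i) :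
    mpow T α = T i * mpow T (α - Pi.single i 1) := by
  conv_lhs => rw [← sub_single_add_single hi]
  exact mpow_add_single hcomm _ i

end Mpow

section RowOperator

variable {n : ℕ} {E F : Type*} [NormedAddCommGroup E] [InnerProductSpace ℂ E]
  [NormedAddCommGroup F] [InnerProductSpace ℂ F]

theorem rowOp_toLp_single (T : Fin n → E →L[ℂ] F) (i : Fin n) (x : E) :
    rowOp T (WithLp.toLp 2 (Pi.single i x)) = T i x := by
  simp [rowOp, apply_ite]

theorem adjoint_rowOp_apply [CompleteSpace E] [CompleteSpace F] (T : Fin n → E →L[ℂ] F) (y : F) :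
    ContinuousLinearMap.adjoint (rowOp T) y
      = WithLp.toLp 2 fun j ↦ ContinuousLinearMap.adjoint (T j) y := by
  refine ext_inner_left ℂ fun v ↦ ?_
  rw [ContinuousLinearMap.adjoint_inner_right, PiLp.inner_apply, rowOp,
    sum_apply, sum_inner]
  simp [ContinuousLinearMap.adjoint_inner_right]

theorem defect_sq_toLp_single [CompleteSpace E] [CompleteSpace F] {T : Fin n → E →L[ℂ] F}
    {D : PiLp 2 (fun _ : Fin n ↦ E) →L[ℂ] PiLp 2 (fun _ : Fin n ↦ E)}
    (hD : D ∘L D = 1 - ContinuousLinearMap.adjoint (rowOp T) ∘L rowOp T) (i : Fin n) (x : E) :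
    D (D (WithLp.toLp 2 (Pi.single i x)))
      = WithLp.toLp 2 (Pi.single i x - fun j ↦ ContinuousLinearMap.adjoint (T j) (T i x)) := by
  rw [← ContinuousLinearMap.comp_apply, hD, sub_apply,
    ContinuousLinearMap.comp_apply, rowOp_toLp_single, adjoint_rowOp_apply]
  rfl

end RowOperator

section CharCoeff

variable {n : ℕ} {H : Type*} [NormedAddCommGroup H] [InnerProductSpace ℂ H] [CompleteSpace H]
  {T : Fin n → H →L[ℂ] H} {Dstar : H →L[ℂ] H}
  {D : PiLp 2 (fun _ : Fin n ↦ H) →L[ℂ] PiLp 2 (fun _ : Fin n ↦ H)}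

theorem charCoeff_apply_defect_toLp_single
    (hD : D ∘L D = 1 - ContinuousLinearMap.adjoint (rowOp T) ∘L rowOp T)
    (α : Fin n → ℕ) (i : Fin n) (h : H) :
    charCoeff T Dstar D α (D (WithLp.toLp 2 (Pi.single i h)))
      = (if 0 < α i then
          (Nat.multinomial .univ (α - Pi.single i 1) : ℂ) •
            Dstar (star (mpow T (α - Pi.single i 1)) h)
        else 0)
        - ∑ j ∈ Finset.univ.filter (0 < α ·), (Nat.multinomial .univ (α - Pi.single j 1) : ℂ) •
            Dstar (star (mpow T (α - Pi.single j 1)) (ContinuousLinearMap.adjoint (T j) (T i h))) := by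
  have hsingle : ∀ j, Dstar (star (mpow T (α - Pi.single j 1)) ((Pi.single i h : Fin n → H) j))
      = if i = j then Dstar (star (mpow T (α - Pi.single i 1)) h) else 0 := fun j ↦ by
    by_cases hij : i = j
    · subst hij; simp
    · simp [hij]
  simp only [charCoeff, sum_apply, smul_apply, ContinuousLinearMap.comp_apply, PiLp.proj_apply,
    defect_sq_toLp_single hD, Pi.sub_apply, map_sub, smul_sub, Finset.sum_sub_distrib, hsingle,
    smul_ite, smul_zero, Finset.sum_ite_eq, Finset.mem_filter, Finset.mem_univ, true_and]

theorem multinomial_smul_adjoint_comp_mpow_comp (hcomm : ∀ i j, Commute (T i) (T j))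
    (hDstar : IsSelfAdjoint Dstar)
    (hD : D ∘L D = 1 - ContinuousLinearMap.adjoint (rowOp T) ∘L rowOp T)
    {α : Fin n → ℕ} (hα : 0 < ∑ i, α i) (hθ : charCoeff T Dstar D α = 0) (i : Fin n) :
    (Nat.multinomial .univ α : ℂ) • (star (T i) ∘L mpow T α ∘L Dstar)
      = if 0 < α i then
          (Nat.multinomial .univ (α - Pi.single i 1) : ℂ) • (mpow T (α - Pi.single i 1) ∘L Dstar)
        else 0 := by
  have hop : (if 0 < α i then
        (Nat.multinomial .univ (α - Pi.single i 1) : ℂ) •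
          (Dstar * star (mpow T (α - Pi.single i 1)))
      else 0)
      = ∑ j ∈ Finset.univ.filter (0 < α ·), (Nat.multinomial .univ (α - Pi.single j 1) : ℂ) •
          (Dstar * star (mpow T (α - Pi.single j 1)) * (star (T j) * T i)) := by
    ext h
    have hvanish := charCoeff_apply_defect_toLp_single (Dstar := Dstar) hD α i h
    rw [hθ, zero_apply, eq_comm, sub_eq_zero] at hvanish
    rw [apply_ite (fun f : H →L[ℂ] H ↦ f h)]
    simpa only [mul_apply_eq_comp, smul_apply, sum_apply, zero_apply,
      ContinuousLinearMap.star_eq_adjoint] using hvanish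
  have hadj := congrArg star hop
  simp only [apply_ite star, star_zero, star_smul, star_natCast, star_sum, star_mul, star_star,
    hDstar.star_eq] at hadj
  simp only [← ContinuousLinearMap.mul_def]
  rw [hadj, multinomial_eq_sum_multinomial_sub_single hα, Nat.cast_sum, Finset.sum_smul]
  refine Finset.sum_congr rfl fun j hj ↦ ?_
  rw [mpow_eq_mul_mpow_sub_single hcomm (Finset.mem_filter.mp hj).2]
  simp only [mul_assoc]

end CharCoeff

theorem statement_1_general {n : ℕ} {H : Type*} [NormedAddCommGroup H] [InnerProductSpace ℂ H]
    [CompleteSpace H]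
    (T : Fin n → H →L[ℂ] H) (m : ℕ)
    (hcomm : ∀ i j, Commute (T i) (T j))
    (Dstar : H →L[ℂ] H) (hD1 : Dstar.IsPositive)
    (D : PiLp 2 (fun _ : Fin n => H) →L[ℂ] PiLp 2 (fun _ : Fin n => H))
    (hDT2 : D ∘L D = 1 - (ContinuousLinearMap.adjoint (rowOp T)) ∘L rowOp T)
    (hpoly : ∀ β : Fin n → ℕ, m < ∑ i, β i → charCoeff T Dstar D β = 0) :
    ∀ α : Fin n → ℕ, m + 1 ≤ ∑ i, α i → ∀ i : Fin n,
      ((∑ i, α i : ℕ) : ℂ) • (star (T i) ∘L mpow T α ∘L Dstar)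
        = ((α i : ℕ) : ℂ) • (mpow T (α - Pi.single i 1) ∘L Dstar) := by
  intro α hα i
  have key := multinomial_smul_adjoint_comp_mpow_comp hcomm hD1.isSelfAdjoint hDT2
    (by omega) (hpoly α (by omega)) i
  have hγ : (Nat.multinomial .univ α : ℂ) ≠ 0 := mod_cast (Nat.multinomial_pos _ _).ne'
  refine smul_right_injective _ hγ ?_
  simp only [smul_comm (Nat.multinomial .univ α : ℂ), key]
  split_ifs with hi
  · rw [smul_smul, smul_smul, ← Nat.cast_mul, ← Nat.cast_mul,
      sum_mul_multinomial_sub_single (Finset.mem_univ i) hi, mul_comm]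
  · simp [Nat.eq_zero_of_not_pos hi]

theorem statement_1 {n : ℕ} {H : Type*} [NormedAddCommGroup H] [InnerProductSpace ℂ H]
    [CompleteSpace H]
    (T : Fin n → H →L[ℂ] H) (m : ℕ)
    (hcomm : ∀ i j, Commute (T i) (T j))
    (hrow : ((1 : H →L[ℂ] H) - ∑ i, T i ∘L star (T i)).IsPositive)
    (Dstar : H →L[ℂ] H) (hD1 : Dstar.IsPositive)
    (hD2 : Dstar ∘L Dstar = 1 - ∑ i, T i ∘L star (T i))
    (D : PiLp 2 (fun _ : Fin n => H) →L[ℂ] PiLp 2 (fun _ : Fin n => H))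
    (hDT1 : D.IsPositive)
    (hDT2 : D ∘L D = 1 - (ContinuousLinearMap.adjoint (rowOp T)) ∘L rowOp T)
    (hpoly : ∀ β : Fin n → ℕ, m < ∑ i, β i → charCoeff T Dstar D β = 0) :
    ∀ α : Fin n → ℕ, m + 1 ≤ ∑ i, α i → ∀ i : Fin n,
      ((∑ i, α i : ℕ) : ℂ) • (star (T i) ∘L mpow T α ∘L Dstar)
        = ((α i : ℕ) : ℂ) • (mpow T (α - Pi.single i 1) ∘L Dstar) :=
  statement_1_general T m hcomm Dstar hD1 D hDT2 hpoly

end RowContr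
end
end

section
/- Let T_1, …, T_n be pairwise commuting bounded operators on a complex Hilbert space H. Then for every k ≥ 1: I_H − ∑_{α ∈ ℕ^n, |α| = k} γ_α T^α T^{*α} = ∑_{l=0}^{k−1} ∑_{β ∈ ℕ^n, |β| = l} γ_β T^β (I_H − ∑_{i=1}^n T_i T_i*) T^{*β}. -/
open scoped InnerProductSpace

set_option maxHeartbeats 1000000
set_option synthInstance.maxHeartbeats 400000

noncomputable section

namespace RowContr

/-! With `Φᵢ X = Tᵢ X Tᵢ*`, the maps `Φᵢ` commute because the `Tᵢ` do, so the multinomial theorem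
in `Module.End ℂ (H →L[ℂ] H)` gives `(∑ Φᵢ)ᵏ X = ∑_{|α| = k} γ_α T^α X T^{*α}`. The identity is the
geometric sum `(∑_{l < k} Φˡ)(1 - Φ) = 1 - Φᵏ` for `Φ = ∑ Φᵢ`, applied to the identity operator. -/

open Finset Function

theorem _root_.Fin.prod_ofFn_eq_noncommProd {M : Type*} [Monoid M] {n : ℕ} (f : Fin n → M)
    (comm : ((univ : Finset (Fin n)) : Set (Fin n)).Pairwise (Commute on f)) :
    (List.ofFn f).prod = univ.noncommProd f comm := by
  simp only [noncommProd, Fin.univ_val_map, Multiset.noncommProd_coe]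

theorem multiIdx_eq_piAntidiag (n k : ℕ) : multiIdx n k = piAntidiag univ k := by
  ext α
  simp only [multiIdx, mem_filter, Fintype.mem_piFinset, mem_range, mem_piAntidiag, mem_univ,
    implies_true, and_true, and_iff_right_iff_imp]
  rintro rfl i
  exact Nat.lt_succ_of_le (single_le_sum (fun _ _ => Nat.zero_le _) (mem_univ i))

section

variable {n : ℕ} {H : Type*} [NormedAddCommGroup H] [InnerProductSpace ℂ H]

theorem mpow_eq_noncommProd (T : Fin n → H →L[ℂ] H) (hcomm : ∀ i j, Commute (T i) (T j))
    (α : Fin n → ℕ) :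
    mpow T α = univ.noncommProd (fun i => T i ^ α i)
      (fun i _ j _ _ => (hcomm i j).pow_pow (α i) (α j)) :=
  Fin.prod_ofFn_eq_noncommProd _ _

variable [CompleteSpace H]

def conjMap : (H →L[ℂ] H) →* Module.End ℂ (H →L[ℂ] H) where
  toFun A := LinearMap.mulLeft ℂ A * LinearMap.mulRight ℂ (star A)
  map_one' := by ext X; simp
  map_mul' A B := by ext X; simp

@[simp]
theorem conjMap_apply (A X : H →L[ℂ] H) : conjMap A X = A ∘L X ∘L star A :=
  (mul_assoc A X (star A))

theorem sum_conjMap_pow_apply (T : Fin n → H →L[ℂ] H) (hcomm : ∀ i j, Commute (T i) (T j))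
    (k : ℕ) (X : H →L[ℂ] H) :
    ((∑ i, conjMap (T i)) ^ k) X = ∑ α ∈ multiIdx n k,
      (Nat.multinomial univ α : ℂ) • (mpow T α ∘L X ∘L star (mpow T α)) := by
  rw [sum_pow_eq_sum_piAntidiag_of_commute _ _ (fun i _ j _ _ => (hcomm i j).map conjMap),
    ← multiIdx_eq_piAntidiag, LinearMap.sum_apply]
  refine sum_congr rfl fun α _ => ?_
  simp_rw [← map_pow]
  rw [← map_noncommProd _ _ (fun i _ j _ _ => (hcomm i j).pow_pow (α i) (α j)),
    ← mpow_eq_noncommProd T hcomm, Module.End.mul_apply,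
    Module.End.natCast_apply, conjMap_apply, Nat.cast_smul_eq_nsmul]

end

theorem statement_9 {n : ℕ} {H : Type*} [NormedAddCommGroup H] [InnerProductSpace ℂ H]
    [CompleteSpace H]
    (T : Fin n → H →L[ℂ] H)
    (hcomm : ∀ i j, Commute (T i) (T j)) :
    ∀ k : ℕ, 1 ≤ k →
      (1 : H →L[ℂ] H) - ∑ α ∈ multiIdx n k,
          (Nat.multinomial Finset.univ α : ℂ) • (mpow T α ∘L star (mpow T α))
        = ∑ l ∈ Finset.range k, ∑ β ∈ multiIdx n l,
            (Nat.multinomial Finset.univ β : ℂ) •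
              (mpow T β ∘L ((1 : H →L[ℂ] H) - ∑ i, T i ∘L star (T i)) ∘L star (mpow T β)) := by
  intro k _
  have telescope := congrArg (fun f => f 1) (geom_sum_mul_neg (∑ i, conjMap (T i)) k)
  have row_one : (∑ i, conjMap (T i)) 1 = ∑ i, T i ∘L star (T i) := by
    simp [← ContinuousLinearMap.mul_def]
  simp only [Module.End.mul_apply, LinearMap.sum_apply, LinearMap.sub_apply,
    Module.End.one_apply, row_one, sum_conjMap_pow_apply T hcomm] at telescope
  simpa only [← ContinuousLinearMap.mul_def, one_mul] using telescope.symm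

end RowContr
end
end

section
/- Let T be a commuting row contraction on H, m ∈ ℕ, K the closure of the span of {T^α D_{T*} h : h ∈ H, α ∈ ℕ^n}, and M the closure of the span of {T^α D_{T*} h : h ∈ H, |α| ≥ m}. Then for every α ∈ ℕ^n with |α| ≥ m one has T^α K ⊆ M. Consequently, setting H_nil := K ∩ M^⊥ and P := the orthogonal projection onto H_nil, the compression tuple N_i := P T_i|_{H_nil} satisfies P T^α P = 0 for every α with |α| ≥ m; i.e., N = (N_1, …, N_n) is nilpotent of order at most m. -/
open scoped InnerProductSpace

set_option maxHeartbeats 1000000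
set_option synthInstance.maxHeartbeats 400000

noncomputable section

namespace RowContr

/-!
`T^α` maps each generator `T^β D_{T*} h` of `K` to the generator `T^(α+β) D_{T*} h`, which lies
in `M` once `|α| ≥ m`; by continuity `T^α K ⊆ M`. For the compression, `T^α P h ∈ T^α K ⊆ M`
is orthogonal to `H_nil ⊆ Mᗮ`, so its projection onto `H_nil` vanishes.
-/

theorem _root_.List.prod_ofFn_pow_add {M : Type*} [Monoid M] {n : ℕ} (f : Fin n → M)
    (hf : ∀ i j, Commute (f i) (f j)) (α β : Fin n → ℕ) :
    (List.ofFn fun i => f i ^ (α i + β i)).prod =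
      (List.ofFn fun i => f i ^ α i).prod * (List.ofFn fun i => f i ^ β i).prod := by
  induction n with
  | zero => simp
  | succ n ih =>
    have hcomm : Commute (f 0 ^ β 0) (List.ofFn fun i : Fin n => f i.succ ^ α i.succ).prod :=
      Commute.list_prod_right _ _ fun x hx => by
        obtain ⟨i, rfl⟩ := List.mem_ofFn.mp hx
        exact (hf 0 i.succ).pow_pow _ _
    simp only [List.ofFn_succ, List.prod_cons]
    rw [ih (fun i => f i.succ) (fun i j => hf _ _), pow_add, mul_assoc,
      ← mul_assoc (f 0 ^ β 0), hcomm.eq]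
    simp only [mul_assoc]

theorem _root_.Submodule.eq_zero_of_sub_mem_orthogonal {𝕜 E : Type*} [RCLike 𝕜]
    [NormedAddCommGroup E] [InnerProductSpace 𝕜 E] {K : Submodule 𝕜 E} {x y : E} (hy : y ∈ K)
    (hxy : x - y ∈ Kᗮ) (hx : x ∈ Kᗮ) : y = 0 :=
  Submodule.disjoint_def.mp K.orthogonal_disjoint y hy (by simpa using Kᗮ.sub_mem hx hxy)

section

variable {n : ℕ} {H : Type*} [NormedAddCommGroup H] [InnerProductSpace ℂ H]

theorem mpow_add (T : Fin n → H →L[ℂ] H) (hcomm : ∀ i j, Commute (T i) (T j))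
    (α β : Fin n → ℕ) : mpow T (α + β) = mpow T α * mpow T β :=
  List.prod_ofFn_pow_add T hcomm α β

theorem rangeSpanAll_le_comap_mpow (T : Fin n → H →L[ℂ] H) (hcomm : ∀ i j, Commute (T i) (T j))
    (Dstar : H →L[ℂ] H) {m : ℕ} {α : Fin n → ℕ} (hα : m ≤ ∑ i, α i) :
    rangeSpanAll T Dstar ≤ (rangeSpanGE T Dstar m).comap (mpow T α : H →ₗ[ℂ] H) := by
  refine Submodule.topologicalClosure_minimal _ ?_
    ((Submodule.isClosed_topologicalClosure _).preimage (mpow T α).continuous)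
  rw [Submodule.span_le]
  rintro _ ⟨β, h, rfl⟩
  refine Submodule.le_topologicalClosure _ (Submodule.subset_span ⟨α + β, h, ?_, ?_⟩)
  · simpa only [Pi.add_apply, Finset.sum_add_distrib] using le_add_right hα
  · rw [mpow_add T hcomm]
    rfl

end

theorem statement_12_general {n : ℕ} {H : Type*} [NormedAddCommGroup H] [InnerProductSpace ℂ H]
    (T : Fin n → H →L[ℂ] H) (m : ℕ)
    (hcomm : ∀ i j, Commute (T i) (T j))
    (Dstar : H →L[ℂ] H)
    (P : H →L[ℂ] H)
    (hP : ∀ h : H, P h ∈ rangeSpanAll T Dstar ⊓ (rangeSpanGE T Dstar m)ᗮ ∧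
      h - P h ∈ (rangeSpanAll T Dstar ⊓ (rangeSpanGE T Dstar m)ᗮ)ᗮ) :
    (∀ α : Fin n → ℕ, m ≤ ∑ i, α i →
      ∀ x ∈ rangeSpanAll T Dstar, mpow T α x ∈ rangeSpanGE T Dstar m) ∧
    (∀ α : Fin n → ℕ, m ≤ ∑ i, α i → P ∘L mpow T α ∘L P = 0) := by
  have hK : ∀ α : Fin n → ℕ, m ≤ ∑ i, α i →
      ∀ x ∈ rangeSpanAll T Dstar, mpow T α x ∈ rangeSpanGE T Dstar m :=
    fun α hα x hx => rangeSpanAll_le_comap_mpow T hcomm Dstar hα hx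
  refine ⟨hK, fun α hα => ContinuousLinearMap.ext fun h => ?_⟩
  set x := mpow T α (P h)
  have hxM : x ∈ rangeSpanGE T Dstar m := hK α hα _ (hP h).1.1
  have hx_orth : x ∈ (rangeSpanAll T Dstar ⊓ (rangeSpanGE T Dstar m)ᗮ)ᗮ :=
    Submodule.orthogonal_le inf_le_right (Submodule.le_orthogonal_orthogonal _ hxM)
  exact Submodule.eq_zero_of_sub_mem_orthogonal (hP x).1 (hP x).2 hx_orth

theorem statement_12 {n : ℕ} {H : Type*} [NormedAddCommGroup H] [InnerProductSpace ℂ H]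
    [CompleteSpace H]
    (T : Fin n → H →L[ℂ] H) (m : ℕ)
    (hcomm : ∀ i j, Commute (T i) (T j))
    (hrow : ((1 : H →L[ℂ] H) - ∑ i, T i ∘L star (T i)).IsPositive)
    (Dstar : H →L[ℂ] H) (hD1 : Dstar.IsPositive)
    (hD2 : Dstar ∘L Dstar = 1 - ∑ i, T i ∘L star (T i))
    (P : H →L[ℂ] H)
    (hP : ∀ h : H, P h ∈ rangeSpanAll T Dstar ⊓ (rangeSpanGE T Dstar m)ᗮ ∧
      h - P h ∈ (rangeSpanAll T Dstar ⊓ (rangeSpanGE T Dstar m)ᗮ)ᗮ) :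
    (∀ α : Fin n → ℕ, m ≤ ∑ i, α i →
      ∀ x ∈ rangeSpanAll T Dstar, mpow T α x ∈ rangeSpanGE T Dstar m) ∧
    (∀ α : Fin n → ℕ, m ≤ ∑ i, α i → P ∘L mpow T α ∘L P = 0) :=
  statement_12_general T m hcomm Dstar P hP

end RowContr
end
end

section
/- Let H = H_1 ⊕ H_0 ⊕ H_{−1} be an orthogonal decomposition of a complex Hilbert space, and let T = (T_1, …, T_n) be a commuting row contraction on H such that each T_i is block upper triangular with respect to this decomposition (i.e., T_i H_1 ⊆ H_1 and T_i (H_1 ⊕ H_0) ⊆ H_1 ⊕ H_0). Let W_i := P_{H_{−1}} T_i|_{H_{−1}} be the compressions to H_{−1}. If ∑_{i=1}^n W_i W_i* = I_{H_{−1}} (i.e., W is a spherical co-isometry), then D_{T*} vanishes on H_{−1} and the range of D_{T*} is orthogonal to H_{−1}; that is, D_{T*} x = 0 for all x ∈ H_{−1} and ⟨D_{T*} h, x⟩ = 0 for all h ∈ H, x ∈ H_{−1}. -/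
/-! For `x ∈ H_{-1}` the co-isometry identity gives
`‖x‖² = ∑ ⟪T_i* x, P T_i* x⟫ = ∑ ‖P T_i* x‖² ≤ ∑ ‖T_i* x‖²`, while `D_{T*}² = I - ∑ T_i T_i*` gives
`‖D_{T*} x‖² = ‖x‖² - ∑ ‖T_i* x‖² ≤ 0`. So `D_{T*}` kills `H_{-1}`, and being self-adjoint its
range is orthogonal to `H_{-1}`. -/

open scoped InnerProductSpace

set_option maxHeartbeats 1000000
set_option synthInstance.maxHeartbeats 400000

noncomputable section

namespace RowContr

section Projection

variable {𝕜 E : Type*} [RCLike 𝕜] [NormedAddCommGroup E] [InnerProductSpace 𝕜 E]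
  {K : Submodule 𝕜 E} {u v : E}

theorem inner_eq_of_sub_mem_orthogonal {w : E} (hw : w ∈ K) (huv : u - v ∈ Kᗮ) :
    ⟪w, v⟫_𝕜 = ⟪w, u⟫_𝕜 := by
  have h := Submodule.inner_right_of_mem_orthogonal hw huv
  rw [inner_sub_right, sub_eq_zero] at h
  exact h.symm

theorem re_inner_eq_norm_sq_of_sub_mem_orthogonal (hv : v ∈ K) (huv : u - v ∈ Kᗮ) :
    RCLike.re ⟪u, v⟫_𝕜 = ‖v‖ ^ 2 := by
  rw [inner_re_symm, ← inner_eq_of_sub_mem_orthogonal hv huv, inner_self_eq_norm_sq]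

theorem norm_le_of_sub_mem_orthogonal (hv : v ∈ K) (huv : u - v ∈ Kᗮ) : ‖v‖ ≤ ‖u‖ := by
  have hpyth := norm_add_sq_eq_norm_sq_add_norm_sq_of_inner_eq_zero v (u - v)
    (Submodule.inner_right_of_mem_orthogonal hv huv)
  rw [add_sub_cancel] at hpyth
  exact (mul_self_le_mul_self_iff (norm_nonneg _) (norm_nonneg _)).mpr
    (by nlinarith [mul_self_nonneg ‖u - v‖])

end Projection

section RowOperator

variable {𝕜 E ι : Type*} [RCLike 𝕜] [NormedAddCommGroup E] [InnerProductSpace 𝕜 E]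
  [CompleteSpace E] [Fintype ι] {T : ι → E →L[𝕜] E}

theorem norm_apply_sq_eq_of_comp_self_eq {D : E →L[𝕜] E} (hD : IsSelfAdjoint D)
    (hD2 : D ∘L D = 1 - ∑ i, T i ∘L star (T i)) (x : E) :
    ‖D x‖ ^ 2 = ‖x‖ ^ 2 - ∑ i, ‖star (T i) x‖ ^ 2 := by
  have h : ⟪D x, D x⟫_𝕜 = ⟪x, x⟫_𝕜 - ∑ i, ⟪star (T i) x, star (T i) x⟫_𝕜 := by
    rw [← ContinuousLinearMap.adjoint_inner_left, hD.adjoint_eq,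
      ← ContinuousLinearMap.comp_apply, hD2]
    simp only [sub_apply, one_apply_eq_self, sum_apply,
      ContinuousLinearMap.comp_apply, inner_sub_left, sum_inner,
      ContinuousLinearMap.star_eq_adjoint, ContinuousLinearMap.adjoint_inner_right]
  simpa only [map_sub, map_sum, inner_self_eq_norm_sq] using congrArg RCLike.re h

theorem norm_sq_le_sum_norm_star_apply_sq {K : Submodule 𝕜 E} {P : E →L[𝕜] E}
    (hP : ∀ h, P h ∈ K ∧ h - P h ∈ Kᗮ) {x : E} (hx : x ∈ K)
    (hW : ∑ i, P (T i (P (star (T i) x))) = x) :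
    ‖x‖ ^ 2 ≤ ∑ i, ‖star (T i) x‖ ^ 2 := by
  have hcompr : ∀ i, ⟪x, P (T i (P (star (T i) x)))⟫_𝕜 = ⟪star (T i) x, P (star (T i) x)⟫_𝕜 := by
    intro i
    rw [inner_eq_of_sub_mem_orthogonal hx (hP _).2, ContinuousLinearMap.star_eq_adjoint,
      ContinuousLinearMap.adjoint_inner_left]
  calc ‖x‖ ^ 2 = RCLike.re ⟪x, ∑ i, P (T i (P (star (T i) x)))⟫_𝕜 := by
        rw [hW, inner_self_eq_norm_sq]
    _ = ∑ i, ‖P (star (T i) x)‖ ^ 2 := by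
        simp only [inner_sum, hcompr, map_sum,
          fun i => re_inner_eq_norm_sq_of_sub_mem_orthogonal (hP (star (T i) x)).1 (hP _).2]
    _ ≤ ∑ i, ‖star (T i) x‖ ^ 2 := by
        gcongr with i
        exact norm_le_of_sub_mem_orthogonal (hP _).1 (hP _).2

theorem apply_eq_zero_of_mem_of_compression_coisometry {D : E →L[𝕜] E} (hD : IsSelfAdjoint D)
    (hD2 : D ∘L D = 1 - ∑ i, T i ∘L star (T i)) {K : Submodule 𝕜 E} {P : E →L[𝕜] E}
    (hP : ∀ h, P h ∈ K ∧ h - P h ∈ Kᗮ) {x : E} (hx : x ∈ K)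
    (hW : ∑ i, P (T i (P (star (T i) x))) = x) : D x = 0 := by
  have hle := norm_sq_le_sum_norm_star_apply_sq hP hx hW
  have hDx := norm_apply_sq_eq_of_comp_self_eq hD hD2 x
  have : ‖D x‖ ^ 2 = 0 := le_antisymm (by linarith) (sq_nonneg _)
  simpa using this

end RowOperator

theorem statement_13_general {n : ℕ} {H : Type*} [NormedAddCommGroup H] [InnerProductSpace ℂ H]
    [CompleteSpace H]
    (T : Fin n → H →L[ℂ] H)
    (Dstar : H →L[ℂ] H) (hD1 : Dstar.IsPositive)
    (hD2 : Dstar ∘L Dstar = 1 - ∑ i, T i ∘L star (T i))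
    (Hm1 : Submodule ℂ H)
    (Pm1 : H →L[ℂ] H)
    (hPm1 : ∀ h : H, Pm1 h ∈ Hm1 ∧ h - Pm1 h ∈ Hm1ᗮ)
    (hW : ∀ x ∈ Hm1, ∑ i, Pm1 (T i (Pm1 (star (T i) x))) = x) :
    (∀ x ∈ Hm1, Dstar x = 0) ∧
    (∀ h : H, ∀ x ∈ Hm1, ⟪Dstar h, x⟫_ℂ = 0) := by
  have hsa : IsSelfAdjoint Dstar := hD1.isSelfAdjoint
  have hker : ∀ x ∈ Hm1, Dstar x = 0 := fun x hx =>
    apply_eq_zero_of_mem_of_compression_coisometry hsa hD2 hPm1 hx (hW x hx)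
  refine ⟨hker, fun h x hx => ?_⟩
  rw [← hsa.adjoint_eq, ContinuousLinearMap.adjoint_inner_left, hker x hx, inner_zero_right]

theorem statement_13 {n : ℕ} {H : Type*} [NormedAddCommGroup H] [InnerProductSpace ℂ H]
    [CompleteSpace H]
    (T : Fin n → H →L[ℂ] H)
    (hcomm : ∀ i j, Commute (T i) (T j))
    (hrow : ((1 : H →L[ℂ] H) - ∑ i, T i ∘L star (T i)).IsPositive)
    (Dstar : H →L[ℂ] H) (hD1 : Dstar.IsPositive)
    (hD2 : Dstar ∘L Dstar = 1 - ∑ i, T i ∘L star (T i))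
    (H1 H0 Hm1 : Submodule ℂ H)
    (hH1 : IsClosed (H1 : Set H)) (hH0 : IsClosed (H0 : Set H))
    (hHm1 : IsClosed (Hm1 : Set H))
    (ho10 : ∀ x ∈ H1, ∀ y ∈ H0, ⟪x, y⟫_ℂ = 0)
    (ho1m : ∀ x ∈ H1, ∀ y ∈ Hm1, ⟪x, y⟫_ℂ = 0)
    (ho0m : ∀ x ∈ H0, ∀ y ∈ Hm1, ⟪x, y⟫_ℂ = 0)
    (hsup : H1 ⊔ H0 ⊔ Hm1 = ⊤)
    (htri1 : ∀ i : Fin n, ∀ x ∈ H1, T i x ∈ H1)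
    (htri10 : ∀ i : Fin n, ∀ x ∈ H1 ⊔ H0, T i x ∈ H1 ⊔ H0)
    (Pm1 : H →L[ℂ] H)
    (hPm1 : ∀ h : H, Pm1 h ∈ Hm1 ∧ h - Pm1 h ∈ Hm1ᗮ)
    (hW : ∀ x ∈ Hm1, ∑ i, Pm1 (T i (Pm1 (star (T i) x))) = x) :
    (∀ x ∈ Hm1, Dstar x = 0) ∧
    (∀ h : H, ∀ x ∈ Hm1, ⟪Dstar h, x⟫_ℂ = 0) :=
  statement_13_general T Dstar hD1 hD2 Hm1 Pm1 hPm1 hW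

end RowContr
end
end
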